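/- Let ρ, σ be density matrices on a finite-dimensional Hilbert space with supp(ρ) ⊆ supp(σ), and let P be a pinching channel with J projectors such that P(σ) = σ. Then 0 ≤ D(ρ‖P(ρ)) ≤ log J, where D denotes the Umegaki relative entropy. -/

import Mathlib

open Matrix
open scoped ComplexOrder

/-- Matrix logarithm of a Hermitian matrix via its spectral decomposition, with the
convention `log 0 = 0` (i.e. the logarithm is taken on the support). -/
noncomputable def matLog {ι : Type*} [Fintype ι] [DecidableEq ι]
    (A : Matrix ι ι ℂ) : Matrix ι ι ℂ :=
  if hA : A.IsHermitian then
    (hA.eigenvectorUnitary : Matrix ι ι ℂ) *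
      Matrix.diagonal (fun i => (Real.log (hA.eigenvalues i) : ℂ)) *
      (hA.eigenvectorUnitary : Matrix ι ι ℂ)ᴴ
  else 0

/-- Umegaki relative entropy `D(ρ‖σ) = Tr[ρ log ρ − ρ log σ]`. -/
noncomputable def relEnt {ι : Type*} [Fintype ι] [DecidableEq ι]
    (ρ σ : Matrix ι ι ℂ) : ℝ :=
  ((ρ * matLog ρ).trace - (ρ * matLog σ).trace).re

/-!
Write `τ = Σⱼ Πⱼ ρ Πⱼ`. Expanding `Σⱼₖ (Πⱼ - Πₖ) ρ (Πⱼ - Πₖ) ≥ 0` gives the pinching inequality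
`ρ ≤ J • τ`; in particular `ker τ ⊆ ker ρ`, and `τ` has the same trace as `ρ`.

In eigenbases `ρ = Σᵢ pᵢ |vᵢ⟩⟨vᵢ|`, `τ = Σⱼ qⱼ |wⱼ⟩⟨wⱼ|` with the doubly stochastic overlaps
`eᵢⱼ = |⟨vᵢ, wⱼ⟩|²`, one has `D(ρ‖τ) = Σᵢⱼ pᵢ eᵢⱼ (log pᵢ - log qⱼ)`, and the kernel inclusion says
`pᵢ eᵢⱼ = 0` whenever `qⱼ = 0`. Then `pᵢ (log pᵢ - log qⱼ) ≥ pᵢ - qⱼ` gives `D ≥ 0` (Klein).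

For the upper bound, operator monotonicity of `log` applied to `ρ / J + t ≤ τ + t` (`t > 0`) gives
`Σᵢ pᵢ log (pᵢ / J + t) ≤ Σᵢⱼ pᵢ eᵢⱼ log (qⱼ + t)`; letting `t → 0⁺`, which the kernel inclusion
permits, yields `D(ρ‖τ) ≤ log J`.
-/

open Filter Topology
open scoped InnerProductSpace MatrixOrder Matrix.Norms.L2Operator

lemma sub_le_mul_log_sub_log {p q : ℝ} (hp : 0 ≤ p) (hq : 0 < q) :
    p - q ≤ p * (Real.log p - Real.log q) := by
  rcases hp.eq_or_lt with rfl | hp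
  · simpa using hq.le
  · have h := mul_le_mul_of_nonneg_left (Real.log_le_sub_one_of_pos (div_pos hq hp)) hp.le
    rw [Real.log_div hq.ne' hp.ne', show p * (q / p - 1) = q - p by field_simp] at h
    linarith

lemma tendsto_mul_log_add (a x : ℝ) (h : a ≠ 0 → x ≠ 0) :
    Tendsto (fun t => a * Real.log (x + t)) (𝓝 0) (𝓝 (a * Real.log x)) := by
  rcases eq_or_ne a 0 with rfl | ha
  · simp
  · have : ContinuousAt (fun t => a * Real.log (x + t)) 0 := by
      fun_prop (disch := simpa using h ha)
    simpa using this.tendsto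

section

variable {κ : Type*} [Fintype κ] {p q : κ → ℝ} {e : κ → κ → ℝ}

theorem sum_sum_mul_log_le_sum_mul_log (hp : ∀ i, 0 ≤ p i) (hq : ∀ j, 0 ≤ q j)
    (he : ∀ i j, 0 ≤ e i j) (hrow : ∀ i, ∑ j, e i j = 1) (hcol : ∀ j, ∑ i, e i j = 1)
    (hpq : ∑ i, p i = ∑ j, q j) (hsupp : ∀ i j, q j = 0 → p i * e i j = 0) :
    ∑ i, ∑ j, p i * e i j * Real.log (q j) ≤ ∑ i, p i * Real.log (p i) := by
  have hterm : ∀ i j, e i j * (p i - q j) ≤ p i * e i j * (Real.log (p i) - Real.log (q j)) := by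
    intro i j
    rcases (hq j).eq_or_lt with hq0 | hq0
    · rw [show e i j * (p i - q j) = p i * e i j by rw [← hq0]; ring, hsupp i j hq0.symm, zero_mul]
    · calc e i j * (p i - q j) ≤ e i j * (p i * (Real.log (p i) - Real.log (q j))) :=
            mul_le_mul_of_nonneg_left (sub_le_mul_log_sub_log (hp i) hq0) (he i j)
        _ = p i * e i j * (Real.log (p i) - Real.log (q j)) := by ring
  have hzero : ∑ i, ∑ j, e i j * (p i - q j) = 0 := by
    simp only [mul_sub, Finset.sum_sub_distrib]
    rw [Finset.sum_comm (f := fun i j => e i j * q j)]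
    simp only [← Finset.sum_mul, hrow, hcol, one_mul, hpq, sub_self]
  have hlog_p : ∀ i, ∑ j, p i * e i j * Real.log (p i) = p i * Real.log (p i) := fun i => by
    rw [← Finset.sum_mul, ← Finset.mul_sum, hrow, mul_one]
  have hklein : 0 ≤ ∑ i, ∑ j, p i * e i j * (Real.log (p i) - Real.log (q j)) :=
    hzero ▸ Finset.sum_le_sum fun i _ => Finset.sum_le_sum fun j _ => hterm i j
  simpa only [mul_sub, Finset.sum_sub_distrib, hlog_p, sub_nonneg] using hklein

theorem sum_mul_log_div_le_of_forall_pos {c : ℝ} (hc : c ≠ 0)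
    (hsupp : ∀ i j, q j = 0 → p i * e i j = 0)
    (h : ∀ t > 0, ∑ i, p i * Real.log (p i / c + t) ≤
      ∑ i, ∑ j, p i * e i j * Real.log (q j + t)) :
    ∑ i, p i * Real.log (p i / c) ≤ ∑ i, ∑ j, p i * e i j * Real.log (q j) := by
  refine le_of_tendsto_of_tendsto (b := 𝓝[>] 0) ?_ ?_ (eventually_nhdsWithin_of_forall h)
  · exact tendsto_finsetSum _ fun i _ =>
      (tendsto_mul_log_add _ _ fun hp => div_ne_zero hp hc).mono_left nhdsWithin_le_nhds
  · exact tendsto_finsetSum _ fun i _ => tendsto_finsetSum _ fun j _ =>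
      (tendsto_mul_log_add _ _ fun hpe hq => hpe (hsupp i j hq)).mono_left nhdsWithin_le_nhds

lemma sum_mul_log_div {c : ℝ} (hc : c ≠ 0) (hp : ∑ i, p i = 1) :
    ∑ i, p i * Real.log (p i / c) = ∑ i, p i * Real.log (p i) - Real.log c := by
  have hterm : ∀ i, p i * Real.log (p i / c) = p i * Real.log (p i) - p i * Real.log c := by
    intro i
    rcases eq_or_ne (p i) 0 with hpi | hpi
    · simp [hpi]
    · rw [Real.log_div hpi hc, mul_sub]
  simp only [hterm, Finset.sum_sub_distrib, ← Finset.sum_mul, hp, one_mul]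

end

namespace Matrix

variable {ι : Type*} [Fintype ι]

section Pinching

variable {κ : Type*} [Fintype κ] {P : κ → Matrix ι ι ℂ} {ρ : Matrix ι ι ℂ}

def pinching (P : κ → Matrix ι ι ℂ) (ρ : Matrix ι ι ℂ) : Matrix ι ι ℂ :=
  ∑ k, P k * ρ * P k

lemma PosSemidef.pinching (hP : ∀ k, (P k).IsHermitian) (hρ : ρ.PosSemidef) :
    (pinching P ρ).PosSemidef :=
  posSemidef_sum _ fun k _ => by simpa [(hP k).eq] using hρ.mul_mul_conjTranspose_same (P k)

lemma trace_pinching [DecidableEq ι] (hP : ∀ k, P k * P k = P k) (hsum : ∑ k, P k = 1) :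
    (pinching P ρ).trace = ρ.trace := by
  simp_rw [pinching, trace_sum, trace_mul_comm _ (P _), ← Matrix.mul_assoc, hP, ← trace_sum,
    ← Finset.sum_mul, hsum, Matrix.one_mul]

lemma le_card_smul_pinching [DecidableEq ι] (hP : ∀ k, (P k).IsHermitian)
    (hsum : ∑ k, P k = 1) (hρ : ρ.PosSemidef) : ρ ≤ (Fintype.card κ : ℝ) • pinching P ρ := by
  have hexpand : ∑ j, ∑ k, (P j - P k) * ρ * (P j - P k)ᴴ =
      (2 : ℝ) • ((Fintype.card κ : ℝ) • pinching P ρ - ρ) := by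
    simp only [conjTranspose_sub, (hP _).eq, sub_mul, mul_sub, Finset.sum_sub_distrib]
    simp only [Finset.sum_const, Finset.card_univ, ← Finset.mul_sum, ← Finset.sum_mul, hsum,
      Matrix.mul_one, Matrix.one_mul, pinching, ← Finset.smul_sum]
    rw [← Nat.cast_smul_eq_nsmul ℝ]
    module
  have hpsd : (∑ j, ∑ k, (P j - P k) * ρ * (P j - P k)ᴴ).PosSemidef :=
    posSemidef_sum _ fun j _ => posSemidef_sum _ fun k _ => hρ.mul_mul_conjTranspose_same _
  rw [le_iff, ← inv_smul_smul₀ (two_ne_zero' ℝ) (_ - ρ), ← hexpand]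
  exact hpsd.smul (by norm_num)

end Pinching

lemma PosSemidef.mulVec_eq_zero_of_le_smul {A B : Matrix ι ι ℂ} (hA : A.PosSemidef) {c : ℝ}
    (hAB : A ≤ c • B) {v : ι → ℂ} (hv : B *ᵥ v = 0) : A *ᵥ v = 0 := by
  have h := (le_iff.mp hAB).dotProduct_mulVec_nonneg v
  rw [sub_mulVec, smul_mulVec, hv, smul_zero, zero_sub, dotProduct_neg, neg_nonneg] at h
  exact (hA.dotProduct_mulVec_zero_iff v).mp (le_antisymm h (hA.dotProduct_mulVec_nonneg v))

variable [DecidableEq ι]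

lemma trace_mul_le_trace_mul {A X Y : Matrix ι ι ℂ} (hA : 0 ≤ A) (hXY : X ≤ Y) :
    (A * X).trace ≤ (A * Y).trace := by
  rw [← sub_nonneg, ← trace_sub, ← Matrix.mul_sub, ← CFC.sqrt_mul_sqrt_self A hA,
    Matrix.mul_assoc, trace_mul_comm, Matrix.mul_assoc]
  have hS : (CFC.sqrt A)ᴴ = CFC.sqrt A := (CFC.sqrt_nonneg A).isSelfAdjoint
  simpa [hS, Matrix.mul_assoc] using
    ((sub_nonneg.mpr hXY).posSemidef.mul_mul_conjTranspose_same (CFC.sqrt A)).trace_nonneg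

namespace IsHermitian

variable {A B : Matrix ι ι ℂ}

noncomputable def eigenOverlap (hA : A.IsHermitian) (hB : B.IsHermitian) (i j : ι) : ℝ :=
  ‖⟪hA.eigenvectorBasis i, hB.eigenvectorBasis j⟫_ℂ‖ ^ 2

lemma sum_eigenOverlap_right (hA : A.IsHermitian) (hB : B.IsHermitian) (i : ι) :
    ∑ j, hA.eigenOverlap hB i j = 1 := by
  simp [eigenOverlap, OrthonormalBasis.sum_sq_norm_inner_left]

lemma sum_eigenOverlap_left (hA : A.IsHermitian) (hB : B.IsHermitian) (j : ι) :
    ∑ i, hA.eigenOverlap hB i j = 1 := by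
  simp [eigenOverlap, OrthonormalBasis.sum_sq_norm_inner_right]

lemma eigenOverlap_self (hA : A.IsHermitian) (i j : ι) :
    hA.eigenOverlap hA i j = if i = j then 1 else 0 := by
  simp [eigenOverlap, orthonormal_iff_ite.mp hA.eigenvectorBasis.orthonormal, apply_ite]

lemma eigenOverlap_nonneg (hA : A.IsHermitian) (hB : B.IsHermitian) (i j : ι) :
    0 ≤ hA.eigenOverlap hB i j := by
  unfold eigenOverlap
  positivity

lemma eigenvalues_mul_eigenOverlap_eq_zero (hA : A.IsHermitian) (hB : B.IsHermitian)
    (hker : ∀ v, B *ᵥ v = 0 → A *ᵥ v = 0) (i : ι) {j : ι} (hj : hB.eigenvalues j = 0) :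
    hA.eigenvalues i * hA.eigenOverlap hB i j = 0 := by
  have hAw : A *ᵥ (hB.eigenvectorBasis j).ofLp = 0 :=
    hker _ (by rw [hB.mulVec_eigenvectorBasis, hj, zero_smul])
  have h : (hA.eigenvalues i : ℂ) * ⟪hA.eigenvectorBasis i, hB.eigenvectorBasis j⟫_ℂ = 0 :=
    calc _ = (hB.eigenvectorBasis j).ofLp ⬝ᵥ star (A *ᵥ (hA.eigenvectorBasis i).ofLp) := by
          rw [hA.mulVec_eigenvectorBasis, EuclideanSpace.inner_eq_star_dotProduct]
          simp [dotProduct, Finset.mul_sum, mul_left_comm]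
      _ = star (hA.eigenvectorBasis i).ofLp ⬝ᵥ (A *ᵥ (hB.eigenvectorBasis j).ofLp) := by
          rw [star_mulVec, hA.eq, dotProduct_comm, dotProduct_mulVec]
      _ = 0 := by rw [hAw, dotProduct_zero]
  rcases mul_eq_zero.mp h with h | h
  · simp [Complex.ofReal_eq_zero.mp h]
  · simp [eigenOverlap, h]

lemma trace_mul_cfc (hA : A.IsHermitian) (hB : B.IsHermitian) (f : ℝ → ℝ) :
    (A * cfc f B).trace =
      ((∑ i, ∑ j, hA.eigenvalues i * hA.eigenOverlap hB i j * f (hB.eigenvalues j) : ℝ) : ℂ) := by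
  set U : Matrix ι ι ℂ := ↑hA.eigenvectorUnitary
  set W : Matrix ι ι ℂ := ↑hB.eigenvectorUnitary
  set X := star U * W
  have hX : ∀ i j, X i j = ⟪hA.eigenvectorBasis i, hB.eigenvectorBasis j⟫_ℂ := by
    intro i j
    simp [X, U, W, Matrix.mul_apply, EuclideanSpace.inner_eq_star_dotProduct, dotProduct, mul_comm]
  conv_lhs => rw [hA.spectral_theorem, hB.cfc_eq, IsHermitian.cfc]
  simp only [Unitary.conjStarAlgAut_apply]
  have hcycle : ∀ D F : Matrix ι ι ℂ,
      (U * D * star U * (W * F * star W)).trace = (D * X * F * star X).trace := by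
    intro D F
    rw [show U * D * star U * (W * F * star W) = U * (D * star U * W * F * star W) by
      simp only [Matrix.mul_assoc], trace_mul_comm]
    simp only [X, star_mul, star_star, Matrix.mul_assoc]
  rw [hcycle]
  simp only [trace, diag, mul_apply, diagonal_apply, ite_mul, zero_mul, Finset.sum_ite_eq,
    Finset.mem_univ, if_true, star_apply, hX, eigenOverlap, Function.comp_apply, mul_ite,
    mul_zero, Finset.sum_ite_eq']
  push_cast
  refine Finset.sum_congr rfl fun i _ => Finset.sum_congr rfl fun j _ => ?_
  rw [RCLike.star_def]
  linear_combination (↑(hA.eigenvalues i) * ↑(f (hB.eigenvalues j)) : ℂ) *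
    Complex.mul_conj' ⟪hA.eigenvectorBasis i, hB.eigenvectorBasis j⟫_ℂ

lemma trace_mul_cfc_self (hA : A.IsHermitian) (f : ℝ → ℝ) :
    (A * cfc f A).trace = ((∑ i, hA.eigenvalues i * f (hA.eigenvalues i) : ℝ) : ℂ) := by
  simp [trace_mul_cfc hA hA, eigenOverlap_self]

lemma sum_eigenvalues_eq_re_trace (hA : A.IsHermitian) : ∑ i, hA.eigenvalues i = A.trace.re := by
  simp [hA.trace_eq_sum_eigenvalues]

lemma log_cfc (hA : A.IsHermitian) (g : ℝ → ℝ) :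
    CFC.log (cfc g A) = cfc (fun x => Real.log (g x)) A :=
  (cfc_comp Real.log g A (hg := (A.finite_real_spectrum.image g).continuousOn _)
    (hf := A.finite_real_spectrum.continuousOn _)).symm

end IsHermitian

end Matrix

lemma matLog_eq_cfc {ι : Type*} [Fintype ι] [DecidableEq ι] {A : Matrix ι ι ℂ}
    (hA : A.IsHermitian) : matLog A = cfc Real.log A := by
  rw [matLog, dif_pos hA, hA.cfc_eq, IsHermitian.cfc, Unitary.conjStarAlgAut_apply]
  rfl

section RelEnt

variable {ι : Type*} [Fintype ι] [DecidableEq ι] {ρ τ : Matrix ι ι ℂ}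

lemma relEnt_eq_sum (hρ : ρ.IsHermitian) (hτ : τ.IsHermitian) :
    relEnt ρ τ = ∑ i, hρ.eigenvalues i * Real.log (hρ.eigenvalues i) -
      ∑ i, ∑ j, hρ.eigenvalues i * hρ.eigenOverlap hτ i j * Real.log (hτ.eigenvalues j) := by
  rw [relEnt, matLog_eq_cfc hρ, matLog_eq_cfc hτ, hρ.trace_mul_cfc_self, hρ.trace_mul_cfc hτ,
    ← Complex.ofReal_sub, Complex.ofReal_re]

theorem relEnt_nonneg (hρ : ρ.PosSemidef) (hτ : τ.PosSemidef) (htr : ρ.trace = τ.trace)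
    (hker : ∀ v, τ *ᵥ v = 0 → ρ *ᵥ v = 0) : 0 ≤ relEnt ρ τ := by
  have hρH := hρ.isHermitian
  have hτH := hτ.isHermitian
  have hpq : ∑ i, hρH.eigenvalues i = ∑ j, hτH.eigenvalues j := by
    rw [hρH.sum_eigenvalues_eq_re_trace, hτH.sum_eigenvalues_eq_re_trace, htr]
  have := sum_sum_mul_log_le_sum_mul_log hρ.eigenvalues_nonneg hτ.eigenvalues_nonneg
    (hρH.eigenOverlap_nonneg hτH) (hρH.sum_eigenOverlap_right hτH)
    (hρH.sum_eigenOverlap_left hτH) hpq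
    fun i _ hq => hρH.eigenvalues_mul_eigenOverlap_eq_zero hτH hker i hq
  rw [relEnt_eq_sum hρH hτH]
  linarith

lemma sum_mul_log_div_add_le_of_le_smul (hρ : ρ.PosSemidef) (hτ : τ.IsHermitian) {c : ℝ}
    (hc : 0 < c) (hle : ρ ≤ c • τ) {t : ℝ} (ht : 0 < t) :
    ∑ i, hρ.isHermitian.eigenvalues i * Real.log (hρ.isHermitian.eigenvalues i / c + t) ≤
      ∑ i, ∑ j, hρ.isHermitian.eigenvalues i * hρ.isHermitian.eigenOverlap hτ i j *
        Real.log (hτ.eigenvalues j + t) := by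
  have hρH := hρ.isHermitian
  have hX : c⁻¹ • ρ + algebraMap ℝ _ t = cfc (fun x => x / c + t) ρ := by
    simp_rw [div_eq_inv_mul]
    rw [← cfc_const_mul_id c⁻¹ ρ (ha := hρH), ← cfc_add_const t _ ρ (ha := hρH)]
    rfl
  have hY : τ + algebraMap ℝ _ t = cfc (fun x => x + t) τ := by
    conv_lhs => rw [← cfc_id ℝ τ (ha := hτ), ← cfc_add_const t _ τ (ha := hτ)]
    rfl
  have hρτ : c⁻¹ • ρ ≤ τ := by
    simpa [smul_smul, hc.ne'] using smul_le_smul_of_nonneg_left hle (inv_nonneg.mpr hc.le)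
  have hXY : c⁻¹ • ρ + algebraMap ℝ _ t ≤ τ + algebraMap ℝ _ t := by gcongr
  have hlog := CFC.log_le_log hXY
    (IsStrictlyPositive.nonneg_add (smul_nonneg (inv_nonneg.mpr hc.le) hρ.nonneg)
      (isStrictlyPositive_algebraMap ht))
  have htr := trace_mul_le_trace_mul hρ.nonneg hlog
  rw [hX, hY, hρH.log_cfc, hτ.log_cfc, hρH.trace_mul_cfc_self, hρH.trace_mul_cfc hτ] at htr
  exact_mod_cast htr

theorem relEnt_le_log_of_le_smul (hρ : ρ.PosSemidef) (hρ1 : ρ.trace = 1) (hτ : τ.IsHermitian)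
    {c : ℝ} (hc : 0 < c) (hle : ρ ≤ c • τ) : relEnt ρ τ ≤ Real.log c := by
  have hρH := hρ.isHermitian
  have hlim := sum_mul_log_div_le_of_forall_pos (e := hρH.eigenOverlap hτ) hc.ne'
    (fun i _ hq => hρH.eigenvalues_mul_eigenOverlap_eq_zero hτ
      (fun _ hv => hρ.mulVec_eq_zero_of_le_smul hle hv) i hq)
    fun t ht => sum_mul_log_div_add_le_of_le_smul hρ hτ hc hle ht
  rw [sum_mul_log_div hc.ne' (by simp [hρH.sum_eigenvalues_eq_re_trace, hρ1])] at hlim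
  rw [relEnt_eq_sum hρH hτ]
  linarith

end RelEnt

theorem relEnt_pinching_le_log_general
    {ι : Type*} [Fintype ι] [DecidableEq ι] (J : ℕ) (hJ : 0 < J)
    (P : Fin J → Matrix ι ι ℂ)
    (hproj : ∀ j, (P j)ᴴ = P j ∧ P j * P j = P j)
    (hsum : ∑ j, P j = 1)
    (ρ : Matrix ι ι ℂ)
    (hρ : ρ.PosSemidef) (hρ1 : ρ.trace = 1) :
    0 ≤ relEnt ρ (∑ j, P j * ρ * P j) ∧
      relEnt ρ (∑ j, P j * ρ * P j) ≤ Real.log J := by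
  have hP : ∀ j, (P j).IsHermitian := fun j => (hproj j).1
  have hτ : (pinching P ρ).PosSemidef := hρ.pinching hP
  have hle : ρ ≤ (J : ℝ) • pinching P ρ := by
    simpa using le_card_smul_pinching hP hsum hρ
  exact ⟨relEnt_nonneg hρ hτ (trace_pinching (fun j => (hproj j).2) hsum).symm
      fun _ hv => hρ.mulVec_eq_zero_of_le_smul hle hv,
    relEnt_le_log_of_le_smul hρ hρ1 hτ.isHermitian (by exact_mod_cast hJ) hle⟩

/-- For density matrices `ρ, σ` with `supp ρ ⊆ supp σ` and a pinching channel
`P` with `J` projectors fixing `σ`, one has `0 ≤ D(ρ‖P(ρ)) ≤ log J`. -/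
theorem relEnt_pinching_le_log
    {ι : Type*} [Fintype ι] [DecidableEq ι] (J : ℕ) (hJ : 0 < J)
    (P : Fin J → Matrix ι ι ℂ)
    (hproj : ∀ j, (P j)ᴴ = P j ∧ P j * P j = P j)
    (horth : ∀ j j', j ≠ j' → P j * P j' = 0)
    (hsum : ∑ j, P j = 1)
    (ρ σ : Matrix ι ι ℂ)
    (hρ : ρ.PosSemidef) (hρ1 : ρ.trace = 1)
    (hσ : σ.PosSemidef) (hσ1 : σ.trace = 1)
    (hsupp : ∀ v, σ.mulVec v = 0 → ρ.mulVec v = 0)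
    (hfix : ∑ j, P j * σ * P j = σ) :
    0 ≤ relEnt ρ (∑ j, P j * ρ * P j) ∧
      relEnt ρ (∑ j, P j * ρ * P j) ≤ Real.log J :=
  relEnt_pinching_le_log_general J hJ P hproj hsum ρ hρ hρ1
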